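/- The classical Holevo information of the completely depolarising qubit channel used in indefinite input-output direction, χ(F_{|+⟩⟨+|}(N₁)) = (3/4)·[1 − H₂(1/3)] + 1/4 ≈ 0.3113 bits, is strictly positive, where H₂ is the binary entropy; in particular the flipped channel has nonzero classical capacity while C(N₁) = 0. -/

import Mathlib

open Matrix BigOperators Kronecker
open scoped ComplexOrder

noncomputable def plusM : Matrix (Fin 2) (Fin 2) ℂ := Matrix.of fun _ _ => (1 : ℂ) / 2

noncomputable def minusM : Matrix (Fin 2) (Fin 2) ℂ :=
  Matrix.of fun i j => if i = j then (1 : ℂ) / 2 else -((1 : ℂ) / 2)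

/-- The von Neumann entropy (in bits) of a matrix, via its eigenvalues. -/
noncomputable def vNent {n : Type*} [Fintype n] [DecidableEq n] (M : Matrix n n ℂ) : ℝ :=
  if h : M.IsHermitian then -∑ i, h.eigenvalues i * Real.logb 2 (h.eigenvalues i) else 0

/-- The set of Holevo quantities of output ensembles of a channel `f` over all input
ensembles of qubit density matrices. -/
def holevoSet {m : Type*} [Fintype m] [DecidableEq m]
    (f : Matrix (Fin 2) (Fin 2) ℂ → Matrix m m ℂ) : Set ℝ :=
  { x | ∃ (n : ℕ) (p : Fin n → ℝ) (ρ : Fin n → Matrix (Fin 2) (Fin 2) ℂ),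
      (∀ i, 0 ≤ p i) ∧ (∑ i, p i = 1) ∧
      (∀ i, (ρ i).PosSemidef ∧ (ρ i).trace = 1) ∧
      x = vNent (f (∑ i, ((p i : ℝ) : ℂ) • ρ i)) - ∑ i, p i * vNent (f (ρ i)) }

/-- The Holevo information of a channel: the supremum of Holevo quantities over ensembles. -/
noncomputable def holevoInfo {m : Type*} [Fintype m] [DecidableEq m]
    (f : Matrix (Fin 2) (Fin 2) ℂ → Matrix m m ℂ) : ℝ :=
  sSup (holevoSet f)

/-- The completely depolarising qubit channel used in indefinite input-output direction:
`F_{|+⟩⟨+|}(N₁)(ρ) = [I/4 + ρᵀ/4]⊗|+⟩⟨+| + [I/4 − ρᵀ/4]⊗|−⟩⟨−|`. -/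
noncomputable def flippedN1 (ρ : Matrix (Fin 2) (Fin 2) ℂ) :
    Matrix (Fin 2 × Fin 2) (Fin 2 × Fin 2) ℂ :=
  ((1 / 4 : ℂ) • ((1 : Matrix (Fin 2) (Fin 2) ℂ) + ρᵀ)) ⊗ₖ plusM
    + ((1 / 4 : ℂ) • ((1 : Matrix (Fin 2) (Fin 2) ℂ) - ρᵀ)) ⊗ₖ minusM

/-- The completely depolarising qubit channel `N₁(ρ) = I/2`. -/
noncomputable def complDepol (_ : Matrix (Fin 2) (Fin 2) ℂ) : Matrix (Fin 2) (Fin 2) ℂ :=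
  (1 / 2 : ℂ) • (1 : Matrix (Fin 2) (Fin 2) ℂ)

/-- The binary entropy function (base 2). -/
noncomputable def binEnt (x : ℝ) : ℝ := -(x * Real.logb 2 x) - (1 - x) * Real.logb 2 (1 - x)

/-!
If `U` diagonalises `ρᵀ` with eigenvalues `μᵢ`, then `U ⊗ H`, with `H` the Hadamard gate
diagonalising `|+⟩⟨+|` and `|−⟩⟨−|`, diagonalises `F_{|+⟩⟨+|}(N₁)(ρ)` with eigenvalues `(1 ± μᵢ)/4`.
Concavity of `-x log₂ x` then shows that the output entropy lies between `3/2` (attained by pure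
inputs) and its value `3 - (3/4) log₂ 3` at the maximally mixed input. The uniform ensemble of
`|0⟩, |1⟩` attains both bounds at once, so `χ = 3/2 - (3/4) log₂ 3 > 0`. For a constant channel
every Holevo quantity vanishes.
-/

noncomputable def negMulLogb (x : ℝ) : ℝ := -(x * Real.logb 2 x)

lemma concaveOn_negMulLogb : ConcaveOn ℝ (Set.Ici 0) negMulLogb := by
  have h : negMulLogb = (Real.log 2)⁻¹ • Real.negMulLog := by
    funext x
    simp only [negMulLogb, Pi.smul_apply, smul_eq_mul, Real.negMulLog, Real.logb]
    ring
  rw [h]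
  exact Real.concaveOn_negMulLog.smul (inv_nonneg.mpr (Real.log_nonneg one_le_two))

lemma negMulLogb_inv_two_pow (k : ℕ) : negMulLogb (2 ^ k)⁻¹ = k / 2 ^ k := by
  rw [negMulLogb, Real.logb_inv, Real.logb_pow, Real.logb_self_eq_one one_lt_two]
  ring

lemma negMulLogb_zero : negMulLogb 0 = 0 := by
  simp [negMulLogb]

lemma negMulLogb_half : negMulLogb (1 / 2) = 1 / 2 := by
  rw [show (1 / 2 : ℝ) = (2 ^ 1)⁻¹ by norm_num, negMulLogb_inv_two_pow]
  norm_num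

lemma negMulLogb_quarter : negMulLogb (1 / 4) = 1 / 2 := by
  rw [show (1 / 4 : ℝ) = (2 ^ 2)⁻¹ by norm_num, negMulLogb_inv_two_pow]
  norm_num

lemma negMulLogb_eighth : negMulLogb (1 / 8) = 3 / 8 := by
  rw [show (1 / 8 : ℝ) = (2 ^ 3)⁻¹ by norm_num, negMulLogb_inv_two_pow]
  norm_num

lemma negMulLogb_add_le {a b : ℝ} (ha : 0 ≤ a) (hb : 0 ≤ b) :
    negMulLogb a + negMulLogb b ≤ 2 * negMulLogb ((a + b) / 2) := by
  have h := concaveOn_negMulLogb.2 (Set.mem_Ici.mpr ha) (Set.mem_Ici.mpr hb)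
    (by norm_num : (0 : ℝ) ≤ 1 / 2) (by norm_num : (0 : ℝ) ≤ 1 / 2) (by norm_num)
  simp only [smul_eq_mul] at h
  rw [show 1 / 2 * a + 1 / 2 * b = (a + b) / 2 by ring] at h
  linarith

open Polynomial in
lemma vNent_unitary_conj_diagonal {n : Type*} [Fintype n] [DecidableEq n] {U : Matrix n n ℂ}
    (hU : U ∈ unitaryGroup n ℂ) (d : n → ℝ) :
    vNent (U * diagonal (fun i => (d i : ℂ)) * star U) = ∑ i, negMulLogb (d i) := by
  have hM : (U * diagonal (fun i => (d i : ℂ)) * star U).IsHermitian :=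
    isHermitian_mul_mul_conjTranspose U (isHermitian_diagonal_of_self_adjoint _ <| by
      ext i; simp)
  have hchar : (U * diagonal (fun i => (d i : ℂ)) * star U).charpoly
      = ∏ i, (X - C (d i : ℂ)) := by
    rw [charpoly_mul_comm, ← mul_assoc, (mem_unitaryGroup_iff'.mp hU), one_mul, charpoly_diagonal]
  have hroots := hM.roots_charpoly_eq_eigenvalues
  rw [hchar, roots_prod _ _ (by simp [Finset.prod_ne_zero_iff, X_sub_C_ne_zero])] at hroots
  have heig : Finset.univ.val.map hM.eigenvalues = Finset.univ.val.map d :=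
    Multiset.map_injective Complex.ofReal_injective <| by
      simpa [Multiset.map_map, Multiset.bind_singleton] using hroots.symm
  rw [vNent, dif_pos hM, ← Finset.sum_neg_distrib]
  change ∑ i, negMulLogb _ = _
  simpa only [Finset.sum_eq_multiset_sum, Multiset.map_map, Function.comp_def] using
    congrArg (fun s => (s.map negMulLogb).sum) heig

noncomputable def hadamardGate : Matrix (Fin 2) (Fin 2) ℂ :=
  ((√2 : ℝ) : ℂ)⁻¹ • !![1, 1; 1, -1]

lemma inv_sqrt_two_mul_self : ((√2 : ℝ) : ℂ)⁻¹ * ((√2 : ℝ) : ℂ)⁻¹ = 1 / 2 := by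
  rw [← mul_inv, ← Complex.ofReal_mul, Real.mul_self_sqrt zero_le_two]
  norm_num

lemma star_hadamardGate : star hadamardGate = hadamardGate := by
  rw [hadamardGate, star_smul, star_inv₀, Complex.star_def, Complex.conj_ofReal]
  congr 1
  ext i j; fin_cases i <;> fin_cases j <;> simp

lemma hadamardGate_conj_diagonal (a b : ℂ) :
    hadamardGate * diagonal ![a, b] * star hadamardGate
      = (1 / 2 : ℂ) • !![a + b, a - b; a - b, a + b] := by
  rw [star_hadamardGate, hadamardGate, smul_mul_assoc, smul_mul_smul_comm, inv_sqrt_two_mul_self,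
    diagonal_fin_two]
  congr 1
  ext i j; fin_cases i <;> fin_cases j <;> simp <;> ring

lemma hadamardGate_mem_unitaryGroup : hadamardGate ∈ unitaryGroup (Fin 2) ℂ := by
  rw [mem_unitaryGroup_iff, star_hadamardGate, hadamardGate, smul_mul_smul_comm,
    inv_sqrt_two_mul_self]
  ext i j; fin_cases i <;> fin_cases j <;> norm_num [Matrix.mul_fin_two]

lemma plusM_eq : plusM = hadamardGate * diagonal ![1, 0] * star hadamardGate := by
  rw [hadamardGate_conj_diagonal]
  ext i j; fin_cases i <;> fin_cases j <;> simp [plusM]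

lemma minusM_eq : minusM = hadamardGate * diagonal ![0, 1] * star hadamardGate := by
  rw [hadamardGate_conj_diagonal]
  ext i j; fin_cases i <;> fin_cases j <;> simp [minusM]

lemma kronecker_unitary_conj {m n : Type*} [Fintype m] [Fintype n]
    (U A : Matrix m m ℂ) (V B : Matrix n n ℂ) :
    (U * A * star U) ⊗ₖ (V * B * star V) = (U ⊗ₖ V) * (A ⊗ₖ B) * star (U ⊗ₖ V) := by
  simp only [mul_kronecker_mul, star_eq_conjTranspose, conjTranspose_kronecker]

lemma smul_one_add_smul_unitary_conj_diagonal {n : Type*} [Fintype n] [DecidableEq n]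
    {U : Matrix n n ℂ} (hU : U ∈ unitaryGroup n ℂ) (μ : n → ℝ) (c s : ℂ) :
    c • (1 + s • (U * diagonal (fun i => (μ i : ℂ)) * star U))
      = U * diagonal (fun i => c * (1 + s * μ i)) * star U := by
  have hd : diagonal (fun i => c * (1 + s * μ i))
      = c • (1 + s • diagonal (fun i => (μ i : ℂ))) := by
    ext i j; by_cases h : i = j <;> simp [h]
  rw [hd, mul_smul_comm, smul_mul_assoc, mul_add, add_mul, mul_smul_comm, smul_mul_assoc, mul_one,
    mem_unitaryGroup_iff.mp hU]

noncomputable def flippedSpectrum (μ : Fin 2 → ℝ) (p : Fin 2 × Fin 2) : ℝ :=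
  ![(1 + μ p.1) / 4, (1 - μ p.1) / 4] p.2

lemma flippedN1_eq_unitary_conj {ρ U : Matrix (Fin 2) (Fin 2) ℂ}
    (hU : U ∈ unitaryGroup (Fin 2) ℂ) (μ : Fin 2 → ℝ)
    (hρ : ρᵀ = U * diagonal (fun i => (μ i : ℂ)) * star U) :
    flippedN1 ρ = (U ⊗ₖ hadamardGate) * diagonal (fun p => (flippedSpectrum μ p : ℂ))
      * star (U ⊗ₖ hadamardGate) := by
  have hplus := smul_one_add_smul_unitary_conj_diagonal hU μ (1 / 4) 1
  have hminus := smul_one_add_smul_unitary_conj_diagonal hU μ (1 / 4) (-1)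
  rw [one_smul, ← hρ] at hplus
  rw [neg_one_smul, ← sub_eq_add_neg, ← hρ] at hminus
  rw [flippedN1, hplus, hminus, plusM_eq, minusM_eq, kronecker_unitary_conj, kronecker_unitary_conj,
    ← add_mul, ← mul_add, diagonal_kronecker_diagonal, diagonal_kronecker_diagonal, diagonal_add]
  congr 3
  funext ⟨i, j⟩
  fin_cases j <;> simp [flippedSpectrum] <;> ring

def IsDensityMatrix {n : Type*} [Fintype n] (ρ : Matrix n n ℂ) : Prop :=
  ρ.PosSemidef ∧ ρ.trace = 1

noncomputable def flippedEntropy (μ : Fin 2 → ℝ) : ℝ :=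
  ∑ i, (negMulLogb ((1 + μ i) / 4) + negMulLogb ((1 - μ i) / 4))

lemma vNent_flippedN1_of_transpose_eq {ρ U : Matrix (Fin 2) (Fin 2) ℂ}
    (hU : U ∈ unitaryGroup (Fin 2) ℂ) (μ : Fin 2 → ℝ)
    (hρ : ρᵀ = U * diagonal (fun i => (μ i : ℂ)) * star U) :
    vNent (flippedN1 ρ) = flippedEntropy μ := by
  rw [flippedN1_eq_unitary_conj hU μ hρ,
    vNent_unitary_conj_diagonal (kronecker_mem_unitary hU hadamardGate_mem_unitaryGroup),
    Fintype.sum_prod_type]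
  simp [flippedEntropy, flippedSpectrum]

lemma vNent_flippedN1_diagonal (μ : Fin 2 → ℝ) :
    vNent (flippedN1 (diagonal fun i => (μ i : ℂ))) = flippedEntropy μ :=
  vNent_flippedN1_of_transpose_eq (one_mem _) μ (by simp)

lemma exists_vNent_flippedN1_eq {ρ : Matrix (Fin 2) (Fin 2) ℂ} (hρ : IsDensityMatrix ρ) :
    ∃ μ : Fin 2 → ℝ, (∀ i, 0 ≤ μ i) ∧ ∑ i, μ i = 1 ∧ vNent (flippedN1 ρ) = flippedEntropy μ := by
  have hT := hρ.1.transpose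
  refine ⟨hT.1.eigenvalues, hT.eigenvalues_nonneg, ?_,
    vNent_flippedN1_of_transpose_eq hT.1.eigenvectorUnitary.2 _ hT.1.spectral_theorem⟩
  have h := hT.1.trace_eq_sum_eigenvalues
  rw [trace_transpose, hρ.2] at h
  simpa using congrArg Complex.re h.symm

lemma flippedEntropy_le {μ : Fin 2 → ℝ} (hμ : ∀ i, 0 ≤ μ i) (hsum : ∑ i, μ i = 1) :
    flippedEntropy μ ≤ flippedEntropy (fun _ => 1 / 2) := by
  rw [Fin.sum_univ_two] at hsum
  have hplus := negMulLogb_add_le (a := (1 + μ 0) / 4) (b := (1 + μ 1) / 4)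
    (by linarith [hμ 0]) (by linarith [hμ 1])
  have hminus := negMulLogb_add_le (a := (1 - μ 0) / 4) (b := (1 - μ 1) / 4)
    (by linarith [hμ 1]) (by linarith [hμ 0])
  rw [show ((1 + μ 0) / 4 + (1 + μ 1) / 4) / 2 = (1 + 1 / 2) / 4 by linarith] at hplus
  rw [show ((1 - μ 0) / 4 + (1 - μ 1) / 4) / 2 = (1 - 1 / 2) / 4 by linarith] at hminus
  simp only [flippedEntropy, Fin.sum_univ_two]
  linarith

lemma three_halves_le_flippedEntropy {μ : Fin 2 → ℝ} (hμ : ∀ i, 0 ≤ μ i)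
    (hsum : ∑ i, μ i = 1) : 3 / 2 ≤ flippedEntropy μ := by
  have hμ1 : ∀ i, μ i ≤ 1 := fun i => by
    fin_cases i <;> simp [Fin.sum_univ_two] at hsum ⊢ <;> linarith [hμ 0, hμ 1]
  -- concavity along the chords `[1/4, 1/2]` and `[1/4, 0]`
  have hchord : ∀ i, 1 / 2 + (1 - μ i) / 2
      ≤ negMulLogb ((1 + μ i) / 4) + negMulLogb ((1 - μ i) / 4) := by
    intro i
    have hup := concaveOn_negMulLogb.2 (x := 1 / 4) (y := 1 / 2) (by norm_num) (by norm_num)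
      (sub_nonneg.mpr (hμ1 i)) (hμ i) (by ring)
    have hdown := concaveOn_negMulLogb.2 (x := 1 / 4) (y := 0) (by norm_num) (by norm_num)
      (sub_nonneg.mpr (hμ1 i)) (hμ i) (by ring)
    simp only [smul_eq_mul, negMulLogb_quarter, negMulLogb_half, negMulLogb_zero] at hup hdown
    rw [show (1 - μ i) * (1 / 4) + μ i * (1 / 2) = (1 + μ i) / 4 by ring] at hup
    rw [show (1 - μ i) * (1 / 4) + μ i * 0 = (1 - μ i) / 4 by ring] at hdown
    linarith
  have h := Finset.sum_le_sum fun i (_ : i ∈ Finset.univ) => hchord i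
  simp only [Fin.sum_univ_two] at h hsum
  rw [flippedEntropy, Fin.sum_univ_two]
  linarith

lemma flippedEntropy_half : flippedEntropy (fun _ => 1 / 2) = 3 - 3 / 4 * Real.logb 2 3 := by
  have h38 : negMulLogb (3 / 8) = 3 / 8 * (3 - Real.logb 2 3) := by
    rw [negMulLogb, Real.logb_div three_ne_zero (by norm_num),
      show (8 : ℝ) = 2 ^ 3 by norm_num, Real.logb_pow, Real.logb_self_eq_one one_lt_two]
    ring
  norm_num [flippedEntropy, h38, negMulLogb_eighth]
  ring

lemma flippedEntropy_single (i : Fin 2) : flippedEntropy (Pi.single i 1) = 3 / 2 := by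
  fin_cases i <;> norm_num [flippedEntropy, Fin.sum_univ_two, Pi.single_apply, negMulLogb_quarter,
    negMulLogb_half, negMulLogb_zero]

lemma IsDensityMatrix.sum_smul {n ι : Type*} [Fintype n] [Fintype ι] {p : ι → ℝ}
    {ρ : ι → Matrix n n ℂ} (hp : ∀ i, 0 ≤ p i) (hsum : ∑ i, p i = 1)
    (hρ : ∀ i, IsDensityMatrix (ρ i)) : IsDensityMatrix (∑ i, (p i : ℂ) • ρ i) := by
  refine ⟨posSemidef_sum _ fun i _ => (hρ i).1.smul (Complex.zero_le_real.mpr (hp i)), ?_⟩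
  have htr : ∀ i, (ρ i).trace = 1 := fun i => (hρ i).2
  simp only [trace_sum, trace_smul, htr, smul_eq_mul, mul_one]
  exact_mod_cast hsum

lemma isDensityMatrix_diagonal {n : Type*} [Fintype n] [DecidableEq n] {μ : n → ℝ}
    (hμ : ∀ i, 0 ≤ μ i) (hsum : ∑ i, μ i = 1) : IsDensityMatrix (diagonal fun i => (μ i : ℂ)) :=
  ⟨posSemidef_diagonal_iff.mpr fun i => Complex.zero_le_real.mpr (hμ i), by
    rw [trace_diagonal]; exact_mod_cast hsum⟩

lemma sum_smul_diagonal_ofReal {n ι : Type*} [Fintype ι] [DecidableEq n] (p : ι → ℝ)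
    (μ : ι → n → ℝ) :
    ∑ i, (p i : ℂ) • diagonal (fun j => (μ i j : ℂ))
      = diagonal fun j => ((∑ i, p i * μ i j : ℝ) : ℂ) := by
  ext j k
  by_cases h : j = k <;> simp [h, Matrix.sum_apply]

lemma sub_mem_upperBounds_holevoSet {m : Type*} [Fintype m] [DecidableEq m]
    {f : Matrix (Fin 2) (Fin 2) ℂ → Matrix m m ℂ} {lo hi : ℝ}
    (hlo : ∀ ρ, IsDensityMatrix ρ → lo ≤ vNent (f ρ))
    (hhi : ∀ ρ, IsDensityMatrix ρ → vNent (f ρ) ≤ hi) : hi - lo ∈ upperBounds (holevoSet f) := by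
  rintro x ⟨n, p, ρ, hp, hsum, hρ, rfl⟩
  have havg := hhi _ (IsDensityMatrix.sum_smul hp hsum hρ)
  have hmix : lo ≤ ∑ i, p i * vNent (f (ρ i)) :=
    calc lo = ∑ i, p i * lo := by rw [← Finset.sum_mul, hsum, one_mul]
      _ ≤ _ := Finset.sum_le_sum fun i _ => mul_le_mul_of_nonneg_left (hlo _ (hρ i)) (hp i)
  linarith

lemma zero_mem_holevoSet {m : Type*} [Fintype m] [DecidableEq m]
    (f : Matrix (Fin 2) (Fin 2) ℂ → Matrix m m ℂ) : 0 ∈ holevoSet f := by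
  refine ⟨1, fun _ => 1, fun _ => diagonal fun j => ((Pi.single 0 1 : Fin 2 → ℝ) j : ℂ),
    fun _ => zero_le_one, by simp, fun _ => isDensityMatrix_diagonal ?_ ?_, by simp⟩
  · intro j; fin_cases j <;> simp
  · simp

lemma holevoInfo_eq_zero_of_const {m : Type*} [Fintype m] [DecidableEq m]
    {f : Matrix (Fin 2) (Fin 2) ℂ → Matrix m m ℂ} (hf : ∀ ρ σ, f ρ = f σ) : holevoInfo f = 0 :=
  IsGreatest.csSup_eq ⟨zero_mem_holevoSet f, by
    simpa using sub_mem_upperBounds_holevoSet (f := f) (lo := vNent (f 0)) (hi := vNent (f 0))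
      (fun ρ _ => (hf ρ 0).symm ▸ le_rfl) (fun ρ _ => (hf ρ 0).symm ▸ le_rfl)⟩

lemma holevoInfo_flippedN1 : holevoInfo flippedN1 = flippedEntropy (fun _ => 1 / 2) - 3 / 2 := by
  refine IsGreatest.csSup_eq ⟨?_, sub_mem_upperBounds_holevoSet ?_ ?_⟩
  · refine ⟨2, fun _ => 1 / 2, fun i => diagonal fun j => ((Pi.single i 1 : Fin 2 → ℝ) j : ℂ),
      fun _ => by norm_num, by norm_num, fun i => isDensityMatrix_diagonal ?_ ?_, ?_⟩
    · intro j; by_cases h : j = i <;> simp [h]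
    · simp
    · rw [sum_smul_diagonal_ofReal, vNent_flippedN1_diagonal]
      simp_rw [vNent_flippedN1_diagonal, flippedEntropy_single]
      norm_num [Fin.sum_univ_two, Pi.single_apply]
  · intro ρ hρ
    obtain ⟨μ, hμ, hsum, hent⟩ := exists_vNent_flippedN1_eq hρ
    exact hent ▸ three_halves_le_flippedEntropy hμ hsum
  · intro ρ hρ
    obtain ⟨μ, hμ, hsum, hent⟩ := exists_vNent_flippedN1_eq hρ
    exact hent ▸ flippedEntropy_le hμ hsum

lemma binEnt_one_third : binEnt (1 / 3) = Real.logb 2 3 - 2 / 3 := by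
  rw [binEnt, show (1 : ℝ) - 1 / 3 = 2 / 3 by norm_num, one_div, Real.logb_inv,
    Real.logb_div two_ne_zero three_ne_zero, Real.logb_self_eq_one one_lt_two]
  ring

lemma logb_two_three_lt_two : Real.logb 2 3 < 2 := by
  rw [Real.logb_lt_iff_lt_rpow one_lt_two three_pos]
  norm_num

/-- The Holevo information of the completely depolarising qubit channel used in indefinite
input-output direction equals `(3/4)(1 − H₂(1/3)) + 1/4 ≈ 0.3113` bits and is strictly
positive, whereas the Holevo information (hence classical capacity) of `N₁` itself is 0. -/
theorem holevo_flipped_completely_depolarising :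
    holevoInfo flippedN1 = 3 / 4 * (1 - binEnt (1 / 3)) + 1 / 4
    ∧ 0 < holevoInfo flippedN1
    ∧ holevoInfo complDepol = 0 := by
  have hχ : holevoInfo flippedN1 = 3 / 2 - 3 / 4 * Real.logb 2 3 := by
    rw [holevoInfo_flippedN1, flippedEntropy_half]
    ring
  refine ⟨by rw [hχ, binEnt_one_third]; ring, by rw [hχ]; linarith [logb_two_three_lt_two], ?_⟩
  exact holevoInfo_eq_zero_of_const fun _ _ => rfl
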